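/- Let (L, J) be a locale equipped with a Grothendieck topology and let k ∈ L. Then k is quasi-compact (i.e. for every S-filter 𝔉 on L, 𝔉(k) has at least one cluster point) if and only if for every S-ultrafilter 𝔘 on L, 𝔘(k) converges to some point of L. -/
import Mathlib


universe u

variable {L : Type u} [Order.Frame L]

/-- A sieve on `k` in a locale `L`: a downward-closed subset of `↓k = {x : x ≤ k}`. -/
def IsLSieve (k : L) (S : Set L) : Prop :=
  (∀ x ∈ S, x ≤ k) ∧ ∀ x ∈ S, ∀ y : L, y ≤ x → y ∈ S

/-- A Grothendieck topology on a locale `L`. -/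
structure LGrothendieckTopology (L : Type u) [Order.Frame L] : Type u where
  sieves : L → Set (Set L)
  sieve_mem : ∀ (k : L) (S : Set L), S ∈ sieves k → IsLSieve k S
  top_mem : ∀ k : L, Set.Iic k ∈ sieves k
  stable : ∀ (k : L) (S : Set L), S ∈ sieves k → ∀ m ≤ k, S ∩ Set.Iic m ∈ sieves m
  trans : ∀ (k : L) (S : Set L), S ∈ sieves k → ∀ R : Set L, IsLSieve k R →
    (∀ m ∈ S, R ∩ Set.Iic m ∈ sieves m) → R ∈ sieves k

/-- An `S`-filter on a locale `L`: an assignment of collections of sieves, upward closed (among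
sieves), closed under finite intersections (top and binary), satisfying the restriction
property, and not containing the empty sieve. -/
structure LSFilter (L : Type u) [Order.Frame L] : Type u where
  sieves : L → Set (Set L)
  sieve_mem : ∀ (k : L) (S : Set L), S ∈ sieves k → IsLSieve k S
  mem_of_subset : ∀ (k : L) (S : Set L), S ∈ sieves k → ∀ R : Set L, IsLSieve k R →
    S ⊆ R → R ∈ sieves k
  top_mem : ∀ k : L, Set.Iic k ∈ sieves k
  inter_mem : ∀ (k : L) (S T : Set L), S ∈ sieves k → T ∈ sieves k → S ∩ T ∈ sieves k
  stable : ∀ (k : L) (S : Set L), S ∈ sieves k → ∀ m ≤ k, S ∩ Set.Iic m ∈ sieves m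
  empty_not_mem : ∀ k : L, ∅ ∉ sieves k

/-- `G` is finer than `F` if `F(k) ⊆ G(k)` for all `k`. -/
def LSFilter.Finer (G F : LSFilter L) : Prop := ∀ k : L, F.sieves k ⊆ G.sieves k

/-- An `S`-ultrafilter is an `S`-filter with no strictly finer `S`-filter. -/
def LSFilter.IsUltra (U : LSFilter L) : Prop :=
  ∀ G : LSFilter L, G.Finer U → U.Finer G

/-- The kernel `p⁻¹(0)` of a point `p : L → 2` of the locale `L` (realized as a frame
homomorphism into the frame `Prop`). -/
def LKernel (p : FrameHom L Prop) : Set L := {x : L | ¬ p x}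

/-- For `k ∈ p⁻¹(0)`, a sieve `V ∈ J(k)` is a `𝔊`-neighborhood of the point `p` if
`V ⊆ p⁻¹(0)`. -/
def IsLGNbhd (J : LGrothendieckTopology L) (k : L) (p : FrameHom L Prop) (V : Set L) : Prop :=
  k ∈ LKernel p ∧ V ∈ J.sieves k ∧ V ⊆ LKernel p

/-- A cover-neighborhood of `p` at `k` is a sieve on `k` containing a `𝔊`-neighborhood
of `p`. -/
def IsLCoverNbhd (J : LGrothendieckTopology L) (k : L) (p : FrameHom L Prop)
    (S : Set L) : Prop :=
  IsLSieve k S ∧ ∃ V : Set L, IsLGNbhd J k p V ∧ V ⊆ S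

/-- `𝒩_p(k)`: the set of all cover-neighborhoods of `p` at `k`. -/
def LNbhds (J : LGrothendieckTopology L) (k : L) (p : FrameHom L Prop) : Set (Set L) :=
  {S | IsLCoverNbhd J k p S}

/-- `𝔉(k)` converges to `p` if `𝒩_p(k) ⊆ 𝔉(k)`. -/
def LConverges (J : LGrothendieckTopology L) (F : LSFilter L) (k : L)
    (p : FrameHom L Prop) : Prop :=
  LNbhds J k p ⊆ F.sieves k

/-- `p` lies in the closure of the sieve `A` on `k` if every cover-neighborhood of `p` at `k`
meets `A`. -/
def LInClosure (J : LGrothendieckTopology L) (k : L) (A : Set L)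
    (p : FrameHom L Prop) : Prop :=
  ∀ S ∈ LNbhds J k p, (S ∩ A).Nonempty

/-- `p` is a cluster point of `𝔉(k)` if it lies in the closure of every sieve of `𝔉(k)`. -/
def LIsClusterPt (J : LGrothendieckTopology L) (F : LSFilter L) (k : L)
    (p : FrameHom L Prop) : Prop :=
  ∀ A ∈ F.sieves k, LInClosure J k A p


lemma lsieve_inter {k : L} {S T : Set L} (hS : IsLSieve k S) (hT : IsLSieve k T) :
    IsLSieve k (S ∩ T) :=
  ⟨fun x hx => hS.1 x hx.1, fun x hx y hy => ⟨hS.2 x hx.1 y hy, hT.2 x hx.2 y hy⟩⟩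

lemma lsieve_Iic (k : L) : IsLSieve k (Set.Iic k) :=
  ⟨fun _ hx => hx, fun _ hx _ hy => le_trans hy hx⟩

lemma lsieve_restrict {k : L} {S : Set L} (hS : IsLSieve k S) (m : L) :
    IsLSieve m (S ∩ Set.Iic m) :=
  ⟨fun _ hx => hx.2, fun x hx y hy => ⟨hS.2 x hx.1 y hy, le_trans hy hx.2⟩⟩

lemma lkernel_mono {p : FrameHom L Prop} {x k : L} (hx : x ≤ k) (hk : k ∈ LKernel p) :
    x ∈ LKernel p := fun hpx => hk (OrderHomClass.mono p hx hpx)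

/-- The filter `j ↦ {R : ∃ T ∈ U(j ⊓ m), T ⊆ R}`. -/
def shiftFilter (U : LSFilter L) (m : L) : LSFilter L where
  sieves j := {S | IsLSieve j S ∧ ∃ T ∈ U.sieves (j ⊓ m), T ⊆ S}
  sieve_mem _ _ h := h.1
  mem_of_subset _ S hS R hR hSR :=
    ⟨hR, hS.2.choose, hS.2.choose_spec.1, hS.2.choose_spec.2.trans hSR⟩
  top_mem j := ⟨lsieve_Iic j, Set.Iic (j ⊓ m), U.top_mem _, fun _ hx => le_trans hx inf_le_left⟩
  inter_mem j S T hS hT := by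
    obtain ⟨hS1, T1, hT1, h1⟩ := hS
    obtain ⟨hT2, T2, hT2m, h2⟩ := hT
    exact ⟨lsieve_inter hS1 hT2, T1 ∩ T2, U.inter_mem _ _ _ hT1 hT2m,
      fun x hx => ⟨h1 hx.1, h2 hx.2⟩⟩
  stable j S hS j' hj' := by
    obtain ⟨hS1, T, hT, hTS⟩ := hS
    exact ⟨lsieve_restrict hS1 j', T ∩ Set.Iic (j' ⊓ m),
      U.stable _ _ hT _ (inf_le_inf_right m hj'),
      fun x hx => ⟨hTS hx.1, le_trans hx.2 inf_le_left⟩⟩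
  empty_not_mem j h := by
    obtain ⟨-, T, hT, hTS⟩ := h
    exact U.empty_not_mem (j ⊓ m) (by rwa [Set.subset_empty_iff.mp hTS] at hT)

/-- If `k` is quasi-compact then every sieve of any filter at any level `m ≤ k`
meets any sieve on `k` containing a `J`-cover of `k`. -/
lemma key_meets (J : LGrothendieckTopology L) (k : L)
    (hQ : ∀ F : LSFilter L, ∃ p : FrameHom L Prop, k ∈ LKernel p ∧ LIsClusterPt J F k p)
    (U : LSFilter L) {m : L} (hm : m ≤ k) {T : Set L} (hT : T ∈ U.sieves m)
    {N V : Set L} (hNs : IsLSieve k N) (hV : V ∈ J.sieves k) (hVN : V ⊆ N) :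
    (T ∩ N).Nonempty := by
  obtain ⟨p, hpk, hcl⟩ := hQ (shiftFilter U m)
  have hTk : T ∈ (shiftFilter U m).sieves k := by
    have hTs := U.sieve_mem m T hT
    refine ⟨⟨fun x hx => le_trans (hTs.1 x hx) hm, hTs.2⟩, T, ?_, subset_rfl⟩
    rwa [inf_eq_right.mpr hm]
  have hN : N ∈ LNbhds J k p :=
    ⟨hNs, V, ⟨hpk, hV, fun x hx => lkernel_mono ((J.sieve_mem k V hV).1 x hx) hpk⟩, hVN⟩
  obtain ⟨x, hx⟩ := hcl T hTk N hN
  exact ⟨x, hx.2, hx.1⟩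

/-- The filter generated by `U` together with the sieve `N`, given properness. -/
def extendFilter (U : LSFilter L) (N : Set L)
    (hne : ∀ j, ∀ T ∈ U.sieves j, (T ∩ N ∩ Set.Iic j).Nonempty) : LSFilter L where
  sieves j := {R | IsLSieve j R ∧ ∃ T ∈ U.sieves j, T ∩ N ∩ Set.Iic j ⊆ R}
  sieve_mem _ _ h := h.1
  mem_of_subset _ S hS R hR hSR :=
    ⟨hR, hS.2.choose, hS.2.choose_spec.1, hS.2.choose_spec.2.trans hSR⟩
  top_mem j := ⟨lsieve_Iic j, Set.Iic j, U.top_mem j, fun _ hx => hx.2⟩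
  inter_mem j S T hS hT := by
    obtain ⟨h1, T1, hT1, hs1⟩ := hS
    obtain ⟨h2, T2, hT2, hs2⟩ := hT
    exact ⟨lsieve_inter h1 h2, T1 ∩ T2, U.inter_mem _ _ _ hT1 hT2,
      fun x hx => ⟨hs1 ⟨⟨hx.1.1.1, hx.1.2⟩, hx.2⟩, hs2 ⟨⟨hx.1.1.2, hx.1.2⟩, hx.2⟩⟩⟩
  stable j S hS j' hj' := by
    obtain ⟨h1, T, hT, hs⟩ := hS
    exact ⟨lsieve_restrict h1 j', T ∩ Set.Iic j', U.stable j T hT j' hj',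
      fun x hx => ⟨hs ⟨⟨hx.1.1.1, hx.1.2⟩, le_trans hx.2 hj'⟩, hx.2⟩⟩
  empty_not_mem j h := by
    obtain ⟨-, T, hT, hs⟩ := h
    obtain ⟨x, hx⟩ := hne j T hT
    exact hs hx

instance : Preorder (LSFilter L) where
  le F G := ∀ j : L, F.sieves j ⊆ G.sieves j
  le_refl _ _ := subset_rfl
  le_trans _ _ _ h1 h2 j := (h1 j).trans (h2 j)

/-- Upper bound of a nonempty chain of `S`-filters. -/
def chainSup (c : Set (LSFilter L)) (hc : IsChain (· ≤ ·) c) (F₀ : LSFilter L)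
    (hF₀ : F₀ ∈ c) : LSFilter L where
  sieves j := {S | ∃ G ∈ c, S ∈ G.sieves j}
  sieve_mem j S := fun ⟨G, _, h⟩ => G.sieve_mem j S h
  mem_of_subset j S := fun ⟨G, hGc, h⟩ R hR hSR => ⟨G, hGc, G.mem_of_subset j S h R hR hSR⟩
  top_mem j := ⟨F₀, hF₀, F₀.top_mem j⟩
  inter_mem j S T := fun ⟨G1, hG1, h1⟩ ⟨G2, hG2, h2⟩ => by
    rcases hc.total hG1 hG2 with h | h
    · exact ⟨G2, hG2, G2.inter_mem j S T (h j h1) h2⟩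
    · exact ⟨G1, hG1, G1.inter_mem j S T h1 (h j h2)⟩
  stable j S := fun ⟨G, hGc, h⟩ m hm => ⟨G, hGc, G.stable j S h m hm⟩
  empty_not_mem j := fun ⟨G, _, h⟩ => G.empty_not_mem j h

lemma exists_ultra (F : LSFilter L) : ∃ U : LSFilter L, F ≤ U ∧ U.IsUltra := by
  obtain ⟨U, hFU, hmax⟩ := zorn_le_nonempty₀ (Set.univ : Set (LSFilter L))
    (fun c _ hc F₀ hF₀ => ⟨chainSup c hc F₀ hF₀, trivial,
      fun G hGc j S hS => ⟨G, hGc, hS⟩⟩) F trivial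
  exact ⟨U, hFU, fun G hG => hmax.2 trivial hG⟩

/-- `k` is quasi-compact (every `S`-filter has a cluster point at `k`) iff every
`S`-ultrafilter converges at `k` to some point of `L`. -/
theorem lQuasiCompact_iff_lsUltrafilter_converges (J : LGrothendieckTopology L) (k : L) :
    (∀ F : LSFilter L, ∃ p : FrameHom L Prop, k ∈ LKernel p ∧ LIsClusterPt J F k p) ↔
      (∀ U : LSFilter L, U.IsUltra →
        ∃ p : FrameHom L Prop, k ∈ LKernel p ∧ LConverges J U k p) := by
  constructor
  · intro hQ U hU
    obtain ⟨p, hpk, -⟩ := hQ U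
    refine ⟨p, hpk, fun S hS => ?_⟩
    obtain ⟨hSs, V, ⟨-, hVJ, -⟩, hVS⟩ := hS
    have hne : ∀ j, ∀ T ∈ U.sieves j, (T ∩ S ∩ Set.Iic j).Nonempty := by
      intro j T hT
      have hT' : T ∩ Set.Iic (j ⊓ k) ∈ U.sieves (j ⊓ k) := U.stable j T hT _ inf_le_left
      obtain ⟨x, hx1, hx2⟩ := key_meets J k hQ U inf_le_right hT' hSs hVJ hVS
      exact ⟨x, ⟨hx1.1, hx2⟩, le_trans hx1.2 inf_le_left⟩
    have hfin : LSFilter.Finer (extendFilter U S hne) U := fun j R hR =>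
      ⟨U.sieve_mem j R hR, R, hR, fun _ hx => hx.1.1⟩
    have hSG : S ∈ (extendFilter U S hne).sieves k :=
      ⟨hSs, Set.Iic k, U.top_mem k, fun _ hx => hx.1.2⟩
    exact hU _ hfin k hSG
  · intro hC F
    obtain ⟨U, hFU, hUu⟩ := exists_ultra F
    obtain ⟨p, hpk, hconv⟩ := hC U hUu
    refine ⟨p, hpk, fun A hA N hN => ?_⟩
    have hint : N ∩ A ∈ U.sieves k := U.inter_mem k N A (hconv hN) (hFU k hA)
    by_contra h
    rw [Set.not_nonempty_iff_eq_empty] at h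
    exact U.empty_not_mem k (h ▸ hint)
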